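/- Let R be the Novikov ring over a field k (formal series ∑ a_λ t^λ with λ ranging over a discrete subset of [0,∞)). Then for any R-linear map f : V → W between finite rank free R-modules, there exist bases b₁,…,b_m of V and c₁,…,c_n of W, a natural number r ≤ min(m,n), and real numbers 0 ≤ λ₁ ≤ … ≤ λ_r, such that f(b_i) = t^{λ_i} c_i for 1 ≤ i ≤ r and f(b_i) = 0 for r < i ≤ m. -/

import Mathlib

/-- The Novikov ring over a field k, modelled as Hahn series with exponents in
ℝ≥0 (formal series ∑ a_λ t^λ with well-ordered support in [0,∞)). -/
abbrev Nov (k : Type*) [Field k] : Type _ := HahnSeries NNReal k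

/-- The monomial t^λ in the Novikov ring. -/
noncomputable def tpow (k : Type*) [Field k] (l : NNReal) : Nov k :=
  HahnSeries.single l 1

/-!
Over a valuation ring divisibility is total, so some matrix entry `p` of `f` divides all the
others: `f = p • g` where `g` has an entry equal to `1`, i.e. `φ (g v₀) = 1` for a coordinate
functional `φ`. Then `v₀` and `g v₀` split off rank-one summands of `V` and `W` with
complements `ker (φ ∘ g)` and `ker φ`, which are free (direct summands of free modules over a
local ring), and induction on the rank gives a Smith normal form with diagonal
`p, p d₁, p d₂, …`. The Novikov ring is a valuation ring: every nonzero `x` is associated to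
`t ^ order x`, and `x ∣ y` iff `order x ≤ order y`. Rescaling the target basis by the units
turns the diagonal entries into monomials with increasing exponents.
-/

open Module

theorem Module.Basis.exists_eq_smul_of_dvd_repr {R W κ : Type*} [Semiring R] [AddCommMonoid W]
    [Module R W] [Fintype κ] (c : Basis κ R W) {p : R} {w : W} (h : ∀ j, p ∣ c.repr w j) : ∃ w', w = p • w' := by
  choose q hq using h
  exact ⟨∑ j, q j • c j, c.ext_elem fun j => by
    rw [map_smul, Finsupp.smul_apply, c.repr_sum_self, hq, smul_eq_mul]⟩

namespace LinearMap

variable {R V W : Type*} [CommRing R] [AddCommGroup V] [Module R V] [AddCommGroup W] [Module R W]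

def HasSmithNormalForm (f : V →ₗ[R] W) : Prop :=
  ∃ (m n r : ℕ) (hrm : r ≤ m) (hrn : r ≤ n) (b : Basis (Fin m) R V) (c : Basis (Fin n) R W)
    (d : Fin r → R),
    (∀ i, d i ≠ 0) ∧ (∀ i j, i ≤ j → d i ∣ d j) ∧
    (∀ i, f (b (i.castLE hrm)) = d i • c (i.castLE hrn)) ∧
    ∀ i : Fin m, r ≤ (i : ℕ) → f (b i) = 0

theorem hasSmithNormalForm_zero [Nontrivial R] [Free R V] [Module.Finite R V]
    [Free R W] [Module.Finite R W] : (0 : V →ₗ[R] W).HasSmithNormalForm :=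
  ⟨_, _, 0, Nat.zero_le _, Nat.zero_le _, finBasis R V, finBasis R W, Fin.elim0,
    fun i => i.elim0, fun i => i.elim0, fun i => i.elim0, fun _ _ => rfl⟩

section Ker

variable {ψ : V →ₗ[R] R} {v₀ : V}

noncomputable def projKer (h : ψ v₀ = 1) : V →ₗ[R] ker ψ :=
  (LinearMap.id - ψ.smulRight v₀).codRestrict (ker ψ) fun v => mem_ker.2 <| by simp [h]

theorem projKer_comp_subtype (h : ψ v₀ = 1) : projKer h ∘ₗ (ker ψ).subtype = LinearMap.id := by
  ext x
  simp [projKer, mem_ker.1 x.2]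

theorem free_and_finite_ker [IsLocalRing R] [Free R V] [Module.Finite R V] (h : ψ v₀ = 1) :
    Free R (ker ψ) ∧ Module.Finite R (ker ψ) := by
  have hsplit := projKer_comp_subtype h
  have : Projective R (ker ψ) := .of_split _ _ hsplit
  have : Module.Finite R (ker ψ) :=
    .of_surjective (projKer h) (Function.RightInverse.surjective (LinearMap.congr_fun hsplit))
  exact ⟨free_of_flat_of_isLocalRing, this⟩

noncomputable def basisConsKer (h : ψ v₀ = 1) {n : ℕ} (b : Basis (Fin n) R (ker ψ)) :
    Basis (Fin (n + 1)) R V :=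
  b.mkFinCons v₀ (fun c x hx hc => by simpa [h, mem_ker.1 hx] using congr_arg ψ hc)
    fun z => ⟨-ψ z, by simp [h]⟩

theorem basisConsKer_zero (h : ψ v₀ = 1) {n : ℕ} (b : Basis (Fin n) R (ker ψ)) :
    basisConsKer h b 0 = v₀ := by
  simp [basisConsKer]

theorem basisConsKer_succ (h : ψ v₀ = 1) {n : ℕ} (b : Basis (Fin n) R (ker ψ)) (i : Fin n) :
    basisConsKer h b i.succ = b i := by
  simp [basisConsKer]

theorem finrank_ker_add_one [StrongRankCondition R] [Free R (ker ψ)] [Module.Finite R (ker ψ)]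
    (h : ψ v₀ = 1) : finrank R (ker ψ) + 1 = finrank R V := by
  simp [finrank_eq_card_basis (basisConsKer h (finBasis R (ker ψ)))]

end Ker

theorem exists_eq_smul_of_ne_zero [IsDomain R] [ValuationRing R] [Free R V]
    [Module.Finite R V] [Free R W] [Module.Finite R W] {f : V →ₗ[R] W} (hf : f ≠ 0) :
    ∃ (p : R) (g : V →ₗ[R] W) (v₀ : V) (φ : W →ₗ[R] R), p ≠ 0 ∧ f = p • g ∧ φ (g v₀) = 1 := by
  classical
  let b := Free.chooseBasis R V
  let c := Free.chooseBasis R W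
  let A : _ × _ → R := fun x => c.repr (f (b x.1)) x.2
  obtain ⟨x₁, hx₁⟩ : ∃ x, A x ≠ 0 := by
    by_contra! hA
    exact hf (b.ext fun i => c.ext_elem fun j => by simpa using hA (i, j))
  -- Ideals of a valuation ring are totally ordered, so an entry generating the largest ideal
  -- divides all the others.
  obtain ⟨x₀, -, hmax⟩ :=
    Finset.univ.exists_max_image (fun x => Ideal.span {A x}) ⟨x₁, Finset.mem_univ _⟩
  have hdvd : ∀ x, A x₀ ∣ A x := fun x =>
    Ideal.span_singleton_le_span_singleton.1 (hmax x (Finset.mem_univ _))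
  have hp : A x₀ ≠ 0 := fun h => hx₁ (zero_dvd_iff.1 (h ▸ hdvd x₁))
  choose w hw using fun i => c.exists_eq_smul_of_dvd_repr (w := f (b i)) fun j => hdvd (i, j)
  refine ⟨A x₀, b.constr R w, b x₀.1, c.coord x₀.2, hp, b.ext fun i => by simp [hw i], ?_⟩
  have hA : A x₀ * c.coord x₀.2 (w x₀.1) = A x₀ * 1 := by
    conv_rhs => rw [mul_one, show A x₀ = c.repr (f (b x₀.1)) x₀.2 from rfl, hw]
    simp
  simpa using mul_left_cancel₀ hp hA

theorem HasSmithNormalForm.of_restrict_ker [IsDomain R] {f g : V →ₗ[R] W} {p : R}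
    (hp : p ≠ 0) (hfg : f = p • g) {φ : W →ₗ[R] R} {v₀ : V} (h₀ : φ (g v₀) = 1)
    (hg : (g.restrict (p := ker (φ ∘ₗ g)) (q := ker φ) fun _ hv => hv).HasSmithNormalForm) :
    f.HasSmithNormalForm := by
  obtain ⟨m, n, r, hrm, hrn, b, c, d, hd0, hdvd, hdiag, hzero⟩ := hg
  replace hdiag i : g (b (i.castLE hrm)) = d i • (c (i.castLE hrn) : W) :=
    congr_arg Subtype.val (hdiag i)
  replace hzero (i : Fin m) (hi : r ≤ (i : ℕ)) : g (b i) = 0 :=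
    congr_arg Subtype.val (hzero i hi)
  refine ⟨m + 1, n + 1, r + 1, Nat.succ_le_succ hrm, Nat.succ_le_succ hrn,
    basisConsKer (ψ := φ ∘ₗ g) h₀ b, basisConsKer h₀ c, Fin.cons p fun i => p * d i,
    Fin.cases hp fun i => mul_ne_zero hp (hd0 i), ?_, ?_, ?_⟩
  · intro i j hij
    induction j using Fin.cases with
    | zero => rw [Fin.le_zero_iff.1 hij]
    | succ j =>
      induction i using Fin.cases with
      | zero => exact dvd_mul_right p _
      | succ i => exact mul_dvd_mul_left p (hdvd i j (Fin.succ_le_succ_iff.1 hij))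
  · intro i
    induction i using Fin.cases with
    | zero => simp [Fin.castLE_zero, basisConsKer_zero, hfg]
    | succ i => simp [Fin.castLE_succ, basisConsKer_succ, hfg, hdiag, mul_smul]
  · intro i hi
    induction i using Fin.cases with
    | zero => simp at hi
    | succ i => simp [basisConsKer_succ, hfg, hzero i (by simpa using hi)]

theorem hasSmithNormalForm [IsDomain R] [ValuationRing R] [Free R V]
    [Module.Finite R V] [Free R W] [Module.Finite R W] (f : V →ₗ[R] W) :
    f.HasSmithNormalForm := by
  induction hn : finrank R V using Nat.strong_induction_on generalizing V W with
  | _ n ih =>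
    by_cases hf : f = 0
    · exact hf ▸ hasSmithNormalForm_zero
    obtain ⟨p, g, v₀, φ, hp, hfg, h₀⟩ := exists_eq_smul_of_ne_zero hf
    obtain ⟨_, _⟩ := free_and_finite_ker (ψ := φ ∘ₗ g) h₀
    obtain ⟨_, _⟩ := free_and_finite_ker h₀
    refine .of_restrict_ker hp hfg h₀ (ih _ ?_ _ rfl)
    rw [← hn, ← finrank_ker_add_one (ψ := φ ∘ₗ g) h₀]
    exact Nat.lt_succ_self _

end LinearMap

namespace Nov

open HahnSeries

variable {k : Type*} [Field k]

theorem order_tpow (l : NNReal) : (tpow k l).order = l :=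
  order_single one_ne_zero

theorem tpow_ne_zero (l : NNReal) : tpow k l ≠ 0 :=
  single_ne_zero one_ne_zero

theorem tpow_dvd_of_le_order {x : Nov k} {l : NNReal} (h : l ≤ x.order) : tpow k l ∣ x := by
  have hwf : (Function.support fun a => x.coeff (a + l)).IsPWO :=
    (x.isPWO_support.image_of_monotone fun _ _ hab => tsub_le_tsub_right hab l).mono
      fun a ha => ⟨a + l, ha, add_tsub_cancel_right a l⟩
  refine ⟨⟨fun a => x.coeff (a + l), hwf⟩, HahnSeries.ext <| funext fun a => ?_⟩
  rcases le_or_gt l a with hla | hal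
  · obtain ⟨a, rfl⟩ := exists_add_of_le hla
    rw [tpow, add_comm, coeff_single_mul_add, one_mul]
  · rw [coeff_eq_zero_of_lt_order (hal.trans_le h), eq_comm]
    by_contra hne
    obtain ⟨b, hb, c, -, rfl⟩ := support_mul_subset hne
    rw [support_single_subset hb] at hal
    exact not_le.2 hal le_self_add

theorem associated_tpow_order {x : Nov k} (hx : x ≠ 0) : Associated (tpow k x.order) x := by
  obtain ⟨y, hxy⟩ := tpow_dvd_of_le_order (le_refl x.order)
  have hy : y ≠ 0 := right_ne_zero_of_mul (hxy ▸ hx)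
  have hy0 : y.order = 0 := by
    have := congr_arg order hxy
    rwa [order_mul (tpow_ne_zero _) hy, order_tpow, left_eq_add] at this
  nth_rw 2 [hxy]
  refine associated_mul_unit_right _ _
    (isUnit_of_isUnit_leadingCoeff_AddUnitOrder ?_ (hy0 ▸ isAddUnit_zero))
  exact isUnit_iff_ne_zero.2 (leadingCoeff_ne_zero.2 hy)

theorem order_le_order_of_dvd {x y : Nov k} (hy : y ≠ 0) (h : x ∣ y) : x.order ≤ y.order := by
  obtain ⟨z, rfl⟩ := h
  rw [order_mul (left_ne_zero_of_mul hy) (right_ne_zero_of_mul hy)]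
  exact le_self_add

theorem dvd_of_order_le {x y : Nov k} (hx : x ≠ 0) (h : x.order ≤ y.order) : x ∣ y :=
  (associated_tpow_order hx).symm.dvd.trans (tpow_dvd_of_le_order h)

instance : ValuationRing (Nov k) := ValuationRing.iff_dvd_total.2 ⟨fun x y => by
  rcases eq_or_ne x 0 with rfl | hx
  · exact .inr (dvd_zero y)
  rcases eq_or_ne y 0 with rfl | hy
  · exact .inl (dvd_zero x)
  exact (le_total x.order y.order).imp (dvd_of_order_le hx) (dvd_of_order_le hy)⟩

end Nov

/-- Singular value decomposition over the Novikov ring R: any R-linear map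
f : V → W between finite rank free R-modules admits bases b₁,…,b_m of V and
c₁,…,c_n of W, together with r ≤ min(m,n) and 0 ≤ λ₁ ≤ … ≤ λ_r, such that
f(bᵢ) = t^{λᵢ}·cᵢ for i ≤ r and f(bᵢ) = 0 for i > r. -/
theorem stmt_0 (k : Type*) [Field k]
    (V W : Type*) [AddCommGroup V] [Module (Nov k) V] [AddCommGroup W] [Module (Nov k) W]
    [Module.Free (Nov k) V] [Module.Finite (Nov k) V]
    [Module.Free (Nov k) W] [Module.Finite (Nov k) W]
    (f : V →ₗ[Nov k] W) :
    ∃ (m n : ℕ) (b : Module.Basis (Fin m) (Nov k) V) (c : Module.Basis (Fin n) (Nov k) W)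
      (r : ℕ) (hr : r ≤ min m n) (lam : Fin r → NNReal),
      Monotone lam ∧
      (∀ (i : Fin m) (h : (i : ℕ) < r),
        f (b i) = tpow k (lam ⟨i, h⟩) •
          c ⟨i, lt_of_lt_of_le h (le_trans hr (min_le_right m n))⟩) ∧
      (∀ i : Fin m, r ≤ (i : ℕ) → f (b i) = 0) := by
  obtain ⟨m, n, r, hrm, hrn, b, c, d, hd0, hdvd, hdiag, hzero⟩ := f.hasSmithNormalForm
  choose u hu using fun i => Nov.associated_tpow_order (hd0 i)
  let c' := c.unitsSMul fun j => if h : (j : ℕ) < r then u ⟨j, h⟩ else 1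
  refine ⟨m, n, b, c', r, le_min hrm hrn, fun i => (d i).order,
    fun i j hij => Nov.order_le_order_of_dvd (hd0 j) (hdvd i j hij), fun i hi => ?_, hzero⟩
  have h := hdiag ⟨i, hi⟩
  rw [← hu, mul_smul] at h
  simpa [c', Basis.unitsSMul_apply, hi, Units.smul_def] using h
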